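/- Let G be a non-trivial group with trivial center. If T(G) = NHol(G)/Hol(G) is not cyclic of order 2, then there exist non-trivial proper characteristic subgroups K₁, K₂ of G and centerless normal subgroups Q₁, Q₂ of Aut(G) such that: K₁ ∩ K₂ = 1 and [G,G] ⊆ K₁K₂; Q₁ ∩ Q₂ = 1, Inn(G) ⊆ Q₁Q₂, and Q₁·Inn(G) = Q₂·Inn(G); and G/K₁ ≅ Q₁ and G/K₂ ≅ Q₂. -/

import Mathlib

/-- The left regular representation `λ : G →* Perm G`, `λ(σ)(x) = σ·x`. -/
def lambda (G : Type*) [Group G] : G →* Equiv.Perm G where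
  toFun σ := Equiv.mulLeft σ
  map_one' := by ext x; simp
  map_mul' σ τ := by ext x; simp [mul_assoc]

/-- The right regular representation `ρ : G →* Perm G`, `ρ(σ)(x) = x·σ⁻¹`. -/
def rho (G : Type*) [Group G] : G →* Equiv.Perm G where
  toFun σ := Equiv.mulRight σ⁻¹
  map_one' := by ext x; simp
  map_mul' σ τ := by ext x; simp [mul_assoc]

/-- The holomorph `Hol(G)`: the normalizer of `λ(G)` in `Perm G`. -/
def Hol (G : Type*) [Group G] : Subgroup (Equiv.Perm G) :=
  Subgroup.normalizer (((lambda G).range : Subgroup (Equiv.Perm G)) : Set (Equiv.Perm G))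

/-- The multiple holomorph `NHol(G)`: the normalizer of `Hol(G)` in `Perm G`. -/
def NHol (G : Type*) [Group G] : Subgroup (Equiv.Perm G) :=
  Subgroup.normalizer ((Hol G : Subgroup (Equiv.Perm G)) : Set (Equiv.Perm G))

instance holNormalInNHol (G : Type*) [Group G] :
    ((Hol G).subgroupOf (NHol G)).Normal :=
  Subgroup.normal_in_normalizer

/-- `T(G) = NHol(G) / Hol(G)`. -/
def THol (G : Type*) [Group G] : Type _ :=
  NHol G ⧸ (Hol G).subgroupOf (NHol G)

noncomputable instance (G : Type*) [Group G] : Group (THol G) :=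
  QuotientGroup.Quotient.group _

/-!
The inversion `ι : x ↦ x⁻¹` conjugates `λ(G)` onto its centralizer `ρ(G)`, so it normalizes
`Hol(G) = N(λ(G)) = N(ρ(G))`, and it lies outside `Hol(G)` because `G` is nontrivial and
centerless. If `|T(G)| ≠ 2` there is therefore `θ ∈ NHol(G)` with `θ, ιθ ∉ Hol(G)`, and
`N = θ λ(G) θ⁻¹` is a regular subgroup of `Hol(G)`, normalized by `Hol(G)`, other than `λ(G)` and
`ρ(G)`.

Take `K₁ = λ⁻¹(N)`, `K₂ = ρ⁻¹(N)`, and let `Q₂`, `Q₁` be the images of `N` under the conjugation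
actions of `Hol(G)` on `λ(G) ≅ G` and on `ρ(G) ≅ G`. For `n ∈ N` these two automorphisms differ by
conjugation with `n(1)` and move each `g` only within `gK₁`, resp. `gK₂`. Regularity of `N` makes
`n ↦ n(1)⁻¹K₁` and `n ↦ n(1)K₂` surjective homomorphisms onto `G/K₁` and `G/K₂`, with the same
kernels `N ∩ λ(G)`, `N ∩ ρ(G)` as `N → Q₁`, `N → Q₂`. Finally `Q₁` and `Q₂` are normal with
trivial intersection, hence commute, so a central element of either centralizes `Inn(G) ⊆ Q₁Q₂`
and is trivial.
-/

open Subgroup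
open scoped commutatorElement

namespace Subgroup

variable {α : Type*}

structure IsRegular (H : Subgroup (Equiv.Perm α)) : Prop where
  exists_apply_eq : ∀ a b : α, ∃ h ∈ H, h a = b
  eq_one_of_apply_eq : ∀ h ∈ H, ∀ a, h a = a → h = 1

theorem IsRegular.eq_of_apply_eq {H : Subgroup (Equiv.Perm α)} (hH : H.IsRegular)
    {h k : Equiv.Perm α} (hh : h ∈ H) (hk : k ∈ H) {a : α} (hhk : h a = k a) : h = k :=
  inv_mul_eq_one.mp (hH.eq_one_of_apply_eq _ (mul_mem (inv_mem hh) hk) a (by simp [← hhk]))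

theorem IsRegular.eq_of_le {H K : Subgroup (Equiv.Perm α)} [Nonempty α] (hH : H.IsRegular)
    (hK : K.IsRegular) (hle : H ≤ K) : H = K := by
  refine le_antisymm hle fun k hk => ?_
  obtain ⟨a⟩ := ‹Nonempty α›
  obtain ⟨h, hh, hka⟩ := hH.exists_apply_eq a (k a)
  rwa [← hK.eq_of_apply_eq (hle hh) hk hka]

theorem IsRegular.map_conj {H : Subgroup (Equiv.Perm α)} (hH : H.IsRegular) (θ : Equiv.Perm α) :
    (H.map (MulAut.conj θ : Equiv.Perm α →* Equiv.Perm α)).IsRegular where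
  exists_apply_eq a b := by
    obtain ⟨h, hh, hab⟩ := hH.exists_apply_eq (θ⁻¹ a) (θ⁻¹ b)
    refine ⟨θ * h * θ⁻¹, ⟨h, hh, rfl⟩, ?_⟩
    rw [Equiv.Perm.mul_apply, Equiv.Perm.mul_apply, hab]
    exact θ.apply_symm_apply b
  eq_one_of_apply_eq := by
    rintro _ ⟨h, hh, rfl⟩ a hfix
    have : h (θ⁻¹ a) = θ⁻¹ a := Equiv.Perm.eq_inv_iff_eq.mpr hfix
    simp [hH.eq_one_of_apply_eq h hh _ this]

theorem normalizer_le_normalizer_centralizer {G : Type*} [Group G] (H : Subgroup G) :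
    normalizer (H : Set G) ≤ normalizer (centralizer (H : Set G) : Set G) := by
  have key : ∀ f ∈ normalizer (H : Set G), ∀ c ∈ centralizer (H : Set G),
      f * c * f⁻¹ ∈ centralizer (H : Set G) := by
    intro f hf c hc h hh
    have := hc _ ((hf (f⁻¹ * h * f)).mpr (by simpa [mul_assoc] using hh))
    calc h * (f * c * f⁻¹) = f * ((f⁻¹ * h * f) * c) * f⁻¹ := by group
      _ = f * (c * (f⁻¹ * h * f)) * f⁻¹ := by rw [this]
      _ = f * c * f⁻¹ * h := by group
  refine fun f hf c => ⟨key f hf c, fun hc => ?_⟩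
  simpa [mul_assoc] using key f⁻¹ (inv_mem hf) _ hc

theorem map_conj_mul {P : Type*} [Group P] (H : Subgroup P) (a b : P) :
    H.map (MulAut.conj (a * b) : P →* P) =
      (H.map (MulAut.conj b : P →* P)).map (MulAut.conj a : P →* P) := by
  rw [map_map]
  congr 1
  ext
  simp [mul_assoc]

theorem nonempty_mulEquiv_map_of_ker_eq {M A B : Type*} [Group M] [Group A] [Group B]
    {K : Subgroup M} (φ : K →* A) (hφ : Function.Surjective φ) (ψ : M →* B)
    (h : φ.ker = ψ.ker.subgroupOf K) : Nonempty (A ≃* K.map ψ) :=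
  ⟨(QuotientGroup.quotientKerEquivOfSurjective φ hφ).symm.trans <|
    (QuotientGroup.quotientMulEquivOfEq (h.trans (ψ.ker_domRestrict K).symm)).trans <|
      (QuotientGroup.quotientKerEquivRange _).trans
        (MulEquiv.subgroupCongr (ψ.domRestrict_range K))⟩

end Subgroup

namespace MonoidHom

variable {G P : Type*} [Group G] [Group P] (ι : G →* P) (hι : Function.Injective ι)

noncomputable def normalizerToMulAut : normalizer (ι.range : Set P) →* MulAut G :=
  (MulAut.congr (ofInjective hι).symm).toMonoidHom.comp ι.range.normalizerMonoidHom

theorem apply_normalizerToMulAut (f : normalizer (ι.range : Set P)) (g : G) :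
    ι (ι.normalizerToMulAut hι f g) = f * ι g * f⁻¹ := by
  change ((ofInjective hι ((ofInjective hι).symm _)) : P) = _
  rw [MulEquiv.apply_symm_apply]
  rfl

end MonoidHom

theorem MulAut.eq_one_of_forall_commute_conj {G : Type*} [Group G] (hZ : center G = ⊥)
    {φ : MulAut G} (h : ∀ g, Commute φ (MulAut.conj g)) : φ = 1 := by
  ext g
  have hc : g⁻¹ * φ g ∈ center G := mem_center_iff.mpr fun y => by
    have := congr($(h g) (φ.symm y))
    simp only [MulAut.mul_apply, MulAut.conj_apply, map_mul, map_inv,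
      MulEquiv.apply_symm_apply] at this
    calc y * (g⁻¹ * φ g) = g⁻¹ * (g * y * g⁻¹) * φ g := by group
      _ = g⁻¹ * (φ g * y * (φ g)⁻¹) * φ g := by rw [this]
      _ = g⁻¹ * φ g * y := by group
  rw [hZ, mem_bot, inv_mul_eq_one] at hc
  exact hc.symm

theorem MulAut.center_eq_bot_of_inf_eq_bot {G : Type*} [Group G] (hZ : center G = ⊥)
    {Q Q' : Subgroup (MulAut G)} (hQ : Q.Normal) (hQ' : Q'.Normal) (hinf : Q ⊓ Q' = ⊥)
    (hInn : (MulAut.conj : G →* MulAut G).range ≤ Q ⊔ Q') : center Q = ⊥ := by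
  refine eq_bot_iff.mpr fun z hz => mem_bot.mpr (Subtype.ext ?_)
  have hcent : Q ⊔ Q' ≤ centralizer {(z : MulAut G)} := by
    refine sup_le (fun q hq => ?_) (fun q hq => ?_) <;> rw [mem_centralizer_singleton_iff]
    · exact congr($(mem_center_iff.mp hz ⟨q, hq⟩).1)
    · exact (commute_of_normal_of_disjoint Q Q' hQ hQ' (disjoint_iff.mpr hinf) _ _ z.2 hq).symm
  exact MulAut.eq_one_of_forall_commute_conj hZ fun g =>
    ((mem_centralizer_singleton_iff.mp (hcent (hInn ⟨g, rfl⟩))).symm)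

section Holomorph

variable {G : Type*} [Group G]

@[simp] theorem lambda_apply (g x : G) : lambda G g x = g * x := rfl

@[simp] theorem rho_apply (g x : G) : rho G g x = x * g⁻¹ := rfl

theorem lambda_injective : Function.Injective (lambda G) := fun g h hgh => by
  simpa using congr($hgh 1)

theorem rho_injective : Function.Injective (rho G) := fun g h hgh => by
  simpa using congr($hgh 1)

theorem isRegular_lambda_range : (lambda G).range.IsRegular where
  exists_apply_eq a b :=
    ⟨lambda G (b * a⁻¹), ⟨_, rfl⟩, by rw [lambda_apply, inv_mul_cancel_right]⟩
  eq_one_of_apply_eq := by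
    rintro _ ⟨g, rfl⟩ a h
    rw [lambda_apply, mul_eq_right] at h
    rw [h, map_one]

theorem isRegular_rho_range : (rho G).range.IsRegular where
  exists_apply_eq a b :=
    ⟨rho G (b⁻¹ * a), ⟨_, rfl⟩, by rw [rho_apply, mul_inv_rev, inv_inv, mul_inv_cancel_left]⟩
  eq_one_of_apply_eq := by
    rintro _ ⟨g, rfl⟩ a h
    rw [rho_apply, mul_eq_left, inv_eq_one] at h
    rw [h, map_one]

theorem centralizer_lambda_range :
    centralizer ((lambda G).range : Set (Equiv.Perm G)) = (rho G).range := by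
  ext p
  rw [mem_centralizer_iff]
  constructor
  · intro hp
    refine ⟨(p 1)⁻¹, Equiv.ext fun x => ?_⟩
    rw [rho_apply, inv_inv]
    simpa using congr($(hp (lambda G x) ⟨x, rfl⟩) 1)
  · rintro ⟨s, rfl⟩ _ ⟨g, rfl⟩
    ext x
    simp [mul_assoc]

theorem centralizer_rho_range :
    centralizer ((rho G).range : Set (Equiv.Perm G)) = (lambda G).range := by
  ext p
  rw [mem_centralizer_iff]
  constructor
  · intro hp
    refine ⟨p 1, Equiv.ext fun x => ?_⟩
    rw [lambda_apply]
    simpa only [Equiv.Perm.mul_apply, rho_apply, inv_inv, one_mul] using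
      congr($(hp (rho G x⁻¹) ⟨x⁻¹, rfl⟩) 1)
  · rintro ⟨s, rfl⟩ _ ⟨g, rfl⟩
    ext x
    simp [mul_assoc]

theorem normalizer_rho_range : normalizer ((rho G).range : Set (Equiv.Perm G)) = Hol G := by
  apply le_antisymm
  · have := normalizer_le_normalizer_centralizer (rho G).range
    rwa [centralizer_rho_range] at this
  · have := normalizer_le_normalizer_centralizer (lambda G).range
    rwa [centralizer_lambda_range] at this

theorem lambda_range_le_Hol : (lambda G).range ≤ Hol G :=
  le_normalizer

theorem rho_range_le_Hol : (rho G).range ≤ Hol G :=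
  normalizer_rho_range (G := G) ▸ le_normalizer

theorem conj_inv_comp_lambda :
    (MulAut.conj (Equiv.inv G) : Equiv.Perm G →* Equiv.Perm G).comp (lambda G) = rho G := by
  ext g x
  simp

theorem conj_inv_comp_rho :
    (MulAut.conj (Equiv.inv G) : Equiv.Perm G →* Equiv.Perm G).comp (rho G) = lambda G := by
  ext g x
  simp

theorem inv_mem_NHol : Equiv.inv G ∈ NHol G := by
  rw [NHol, mem_normalizer_iff_map_conj_eq, Hol,
    map_normalizer_eq_of_bijective _ (MulAut.conj (Equiv.inv G)).bijective, MonoidHom.map_range,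
    conj_inv_comp_lambda, normalizer_rho_range, Hol]

theorem inv_notMem_Hol [Nontrivial G] (hZ : center G = ⊥) : Equiv.inv G ∉ Hol G := by
  intro h
  rw [Hol, mem_normalizer_iff_map_conj_eq, MonoidHom.map_range, conj_inv_comp_lambda] at h
  have hcomm (g x : G) : x * g = g * x := by
    have : lambda G g ∈ centralizer ((lambda G).range : Set (Equiv.Perm G)) := by
      rw [centralizer_lambda_range, h]
      exact ⟨g, rfl⟩
    simpa using congr($(this (lambda G x) ⟨x, rfl⟩) 1)
  obtain ⟨g, hg⟩ := exists_ne (1 : G)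
  exact hg (mem_bot.mp (hZ ▸ mem_center_iff.mpr (hcomm g)))

noncomputable def conjLambda : Hol G →* MulAut G :=
  (lambda G).normalizerToMulAut lambda_injective

noncomputable def conjRho : Hol G →* MulAut G :=
  ((rho G).normalizerToMulAut rho_injective).comp (inclusion normalizer_rho_range.ge)

theorem lambda_conjLambda (f : Hol G) (g : G) :
    lambda G (conjLambda f g) = f * lambda G g * (f : Equiv.Perm G)⁻¹ :=
  (lambda G).apply_normalizerToMulAut lambda_injective f g

theorem rho_conjRho (f : Hol G) (g : G) :
    rho G (conjRho f g) = f * rho G g * (f : Equiv.Perm G)⁻¹ :=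
  (rho G).apply_normalizerToMulAut rho_injective _ g

theorem apply_eq_conjLambda_mul (f : Hol G) (x : G) :
    (f : Equiv.Perm G) x = conjLambda f x * (f : Equiv.Perm G) 1 := by
  simpa using congr($(lambda_conjLambda f x) ((f : Equiv.Perm G) 1)).symm

theorem apply_eq_mul_conjRho (f : Hol G) (x : G) :
    (f : Equiv.Perm G) x = (f : Equiv.Perm G) 1 * conjRho f x := by
  have := congr($(rho_conjRho f x) ((f : Equiv.Perm G) x))
  simp only [Equiv.Perm.mul_apply, Equiv.Perm.coe_inv, Equiv.symm_apply_apply, rho_apply,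
    mul_inv_cancel] at this
  exact mul_inv_eq_iff_eq_mul.mp this

theorem conjLambda_eq_conj_mul_conjRho (f : Hol G) :
    conjLambda f = MulAut.conj ((f : Equiv.Perm G) 1) * conjRho f := by
  ext x
  rw [MulAut.mul_apply, MulAut.conj_apply, ← apply_eq_mul_conjRho, eq_mul_inv_iff_mul_eq,
    ← apply_eq_conjLambda_mul]

theorem conjLambda_eq_one_iff (f : Hol G) :
    conjLambda f = 1 ↔ (f : Equiv.Perm G) ∈ (rho G).range := by
  rw [← centralizer_lambda_range, mem_centralizer_iff, DFunLike.ext_iff]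
  simp only [MonoidHom.coe_range, Set.forall_mem_range, MulAut.one_apply]
  refine forall_congr' fun g => ?_
  rw [← lambda_injective.eq_iff, lambda_conjLambda, mul_inv_eq_iff_eq_mul, eq_comm]

theorem conjRho_eq_one_iff (f : Hol G) :
    conjRho f = 1 ↔ (f : Equiv.Perm G) ∈ (lambda G).range := by
  rw [← centralizer_rho_range, mem_centralizer_iff, DFunLike.ext_iff]
  simp only [MonoidHom.coe_range, Set.forall_mem_range, MulAut.one_apply]
  refine forall_congr' fun g => ?_
  rw [← rho_injective.eq_iff, rho_conjRho, mul_inv_eq_iff_eq_mul, eq_comm]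

theorem conj_toPerm_comp_lambda (φ : MulAut G) :
    (MulAut.conj (MulAut.toPerm G φ) : Equiv.Perm G →* Equiv.Perm G).comp (lambda G) =
      (lambda G).comp φ := by
  ext g x
  change φ (g * φ.symm x) = φ g * x
  simp

theorem toPerm_mem_Hol (φ : MulAut G) : MulAut.toPerm G φ ∈ Hol G := by
  rw [Hol, mem_normalizer_iff_map_conj_eq, MonoidHom.map_range, conj_toPerm_comp_lambda,
    MonoidHom.range_comp, MonoidHom.range_eq_top.mpr φ.surjective, ← MonoidHom.range_eq_map]

noncomputable def autToHol : MulAut G →* Hol G :=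
  (MulAut.toPerm G).codRestrict (Hol G) toPerm_mem_Hol

theorem conjLambda_autToHol (φ : MulAut G) : conjLambda (autToHol φ) = φ := by
  ext g
  apply lambda_injective
  rw [lambda_conjLambda]
  exact congr($(conj_toPerm_comp_lambda φ) g)

theorem conjRho_autToHol (φ : MulAut G) : conjRho (autToHol φ) = φ := by
  have h := conjLambda_eq_conj_mul_conjRho (autToHol φ)
  rwa [conjLambda_autToHol, show (autToHol φ : Equiv.Perm G) 1 = 1 from map_one φ, map_one,
    one_mul, eq_comm] at h

end Holomorph

section RegularNormal

variable {G : Type*} [Group G] {N : Subgroup (Equiv.Perm G)}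

theorem comap_lambda_characteristic (hN : Hol G ≤ normalizer (N : Set (Equiv.Perm G))) :
    (N.comap (lambda G)).Characteristic :=
  characteristic_iff_le_comap.mpr fun φ g hg => by
    change lambda G (φ g) ∈ N
    rw [← conjLambda_autToHol φ, lambda_conjLambda]
    exact (hN (autToHol φ).2 _).mp hg

theorem comap_rho_characteristic (hN : Hol G ≤ normalizer (N : Set (Equiv.Perm G))) :
    (N.comap (rho G)).Characteristic :=
  characteristic_iff_le_comap.mpr fun φ g hg => by
    change rho G (φ g) ∈ N
    rw [← conjRho_autToHol φ, rho_conjRho]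
    exact (hN (autToHol φ).2 _).mp hg

theorem conjLambda_apply_mul_inv_mem (hN : Hol G ≤ normalizer (N : Set (Equiv.Perm G)))
    {f : Hol G} (hf : (f : Equiv.Perm G) ∈ N) (g : G) :
    conjLambda f g * g⁻¹ ∈ N.comap (lambda G) := by
  rw [mem_comap, map_mul, map_inv, lambda_conjLambda, mul_assoc, mul_assoc]
  exact mul_mem hf <| by
    simpa [mul_assoc] using (hN (lambda_range_le_Hol ⟨g, rfl⟩) _).mp (inv_mem hf)

theorem conjRho_apply_mul_inv_mem (hN : Hol G ≤ normalizer (N : Set (Equiv.Perm G)))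
    {f : Hol G} (hf : (f : Equiv.Perm G) ∈ N) (g : G) :
    conjRho f g * g⁻¹ ∈ N.comap (rho G) := by
  rw [mem_comap, map_mul, map_inv, rho_conjRho, mul_assoc, mul_assoc]
  exact mul_mem hf <| by
    simpa [mul_assoc] using (hN (rho_range_le_Hol ⟨g, rfl⟩) _).mp (inv_mem hf)

theorem apply_one_mem_comap_lambda_iff (hreg : N.IsRegular) {f : Equiv.Perm G} (hf : f ∈ N) :
    f 1 ∈ N.comap (lambda G) ↔ f ∈ (lambda G).range := by
  refine ⟨fun h => ⟨f 1, hreg.eq_of_apply_eq h hf (a := 1) (mul_one _)⟩, ?_⟩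
  rintro ⟨g, rfl⟩
  simpa using hf

theorem apply_one_mem_comap_rho_iff (hreg : N.IsRegular) {f : Equiv.Perm G} (hf : f ∈ N) :
    f 1 ∈ N.comap (rho G) ↔ f ∈ (rho G).range := by
  refine ⟨fun h => ⟨(f 1)⁻¹, hreg.eq_of_apply_eq (by simpa using inv_mem h) hf (a := 1)
    (by rw [rho_apply, inv_inv, one_mul])⟩, ?_⟩
  rintro ⟨g, rfl⟩
  simpa using inv_mem hf

theorem comap_lambda_inf_comap_rho (hZ : center G = ⊥) (hreg : N.IsRegular) :
    N.comap (lambda G) ⊓ N.comap (rho G) = ⊥ := by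
  refine eq_bot_iff.mpr fun g hg => ?_
  have h1 : lambda G g * rho G g = 1 :=
    hreg.eq_one_of_apply_eq _ (mul_mem hg.1 hg.2) 1 (by simp)
  rw [← hZ]
  refine mem_center_iff.mpr fun x => ?_
  have hx : g * (x * g⁻¹) = x := by simpa using congr($h1 x)
  rw [← mul_assoc, mul_inv_eq_iff_eq_mul] at hx
  exact hx.symm

theorem comap_lambda_ne_bot (hNle : N ≤ Hol G)
    (hN : Hol G ≤ normalizer (N : Set (Equiv.Perm G))) (hreg : N.IsRegular)
    (hrho : N ≠ (rho G).range) : N.comap (lambda G) ≠ ⊥ := by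
  intro hbot
  refine hrho (hreg.eq_of_le isRegular_rho_range fun f hf => ?_)
  refine (conjLambda_eq_one_iff ⟨f, hNle hf⟩).mp (MulEquiv.ext fun g => ?_)
  have := conjLambda_apply_mul_inv_mem hN (f := ⟨f, hNle hf⟩) hf g
  rwa [hbot, mem_bot, mul_inv_eq_one] at this

theorem comap_rho_ne_bot (hNle : N ≤ Hol G)
    (hN : Hol G ≤ normalizer (N : Set (Equiv.Perm G))) (hreg : N.IsRegular)
    (hlam : N ≠ (lambda G).range) : N.comap (rho G) ≠ ⊥ := by
  intro hbot
  refine hlam (hreg.eq_of_le isRegular_lambda_range fun f hf => ?_)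
  refine (conjRho_eq_one_iff ⟨f, hNle hf⟩).mp (MulEquiv.ext fun g => ?_)
  have := conjRho_apply_mul_inv_mem hN (f := ⟨f, hNle hf⟩) hf g
  rwa [hbot, mem_bot, mul_inv_eq_one] at this

theorem comap_lambda_ne_top (hreg : N.IsRegular) (hlam : N ≠ (lambda G).range) :
    N.comap (lambda G) ≠ ⊤ := by
  intro htop
  refine hlam (isRegular_lambda_range.eq_of_le hreg ?_).symm
  rintro _ ⟨g, rfl⟩
  exact mem_comap.mp (htop ▸ mem_top g)

theorem comap_rho_ne_top (hreg : N.IsRegular) (hrho : N ≠ (rho G).range) :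
    N.comap (rho G) ≠ ⊤ := by
  intro htop
  refine hrho (isRegular_rho_range.eq_of_le hreg ?_).symm
  rintro _ ⟨g, rfl⟩
  exact mem_comap.mp (htop ▸ mem_top g)

theorem commutator_le_comap_lambda_sup_comap_rho (hNle : N ≤ Hol G)
    (hN : Hol G ≤ normalizer (N : Set (Equiv.Perm G))) (hreg : N.IsRegular) :
    commutator G ≤ N.comap (lambda G) ⊔ N.comap (rho G) := by
  have := comap_rho_characteristic hN
  rw [commutator_def, commutator_le]
  intro x _ g _
  obtain ⟨f, hf, rfl⟩ := hreg.exists_apply_eq 1 x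
  set F : Hol G := ⟨f, hNle hf⟩
  have hAB : conjLambda F g = f 1 * conjRho F g * (f 1)⁻¹ := by
    rw [conjLambda_eq_conj_mul_conjRho]; rfl
  have : ⁅f 1, g⁆ = (f 1 * (conjRho F g * g⁻¹)⁻¹ * (f 1)⁻¹) * (conjLambda F g * g⁻¹) := by
    rw [commutatorElement_def, hAB]; group
  rw [this]
  exact mul_mem (mem_sup_right (Normal.conj_mem inferInstance _
    (inv_mem (conjRho_apply_mul_inv_mem hN hf g)) _))
    (mem_sup_left (conjLambda_apply_mul_inv_mem hN hf g))

theorem normal_map_conjLambda (hNle : N ≤ Hol G)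
    (hN : Hol G ≤ normalizer (N : Set (Equiv.Perm G))) :
    ((N.subgroupOf (Hol G)).map conjLambda).Normal :=
  ((normal_subgroupOf_iff_le_normalizer hNle).mpr hN).map _
    fun φ => ⟨autToHol φ, conjLambda_autToHol φ⟩

theorem normal_map_conjRho (hNle : N ≤ Hol G)
    (hN : Hol G ≤ normalizer (N : Set (Equiv.Perm G))) :
    ((N.subgroupOf (Hol G)).map conjRho).Normal :=
  ((normal_subgroupOf_iff_le_normalizer hNle).mpr hN).map _
    fun φ => ⟨autToHol φ, conjRho_autToHol φ⟩

theorem map_conjRho_inf_map_conjLambda (hZ : center G = ⊥)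
    (hN : Hol G ≤ normalizer (N : Set (Equiv.Perm G))) (hreg : N.IsRegular) :
    (N.subgroupOf (Hol G)).map conjRho ⊓ (N.subgroupOf (Hol G)).map conjLambda = ⊥ := by
  refine eq_bot_iff.mpr ?_
  rintro β ⟨⟨f, hf, rfl⟩, ⟨f', hf', hβ⟩⟩
  refine mem_bot.mpr (MulEquiv.ext fun g => mul_inv_eq_one.mp ?_)
  rw [← mem_bot, ← comap_lambda_inf_comap_rho hZ hreg]
  exact ⟨hβ ▸ conjLambda_apply_mul_inv_mem hN hf' g, conjRho_apply_mul_inv_mem hN hf g⟩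

theorem range_conj_le_map_conjRho_sup_map_conjLambda (hNle : N ≤ Hol G) (hreg : N.IsRegular) :
    (MulAut.conj : G →* MulAut G).range ≤
      (N.subgroupOf (Hol G)).map conjRho ⊔ (N.subgroupOf (Hol G)).map conjLambda := by
  rintro _ ⟨x, rfl⟩
  obtain ⟨f, hf, rfl⟩ := hreg.exists_apply_eq 1 x
  rw [eq_mul_inv_of_mul_eq (conjLambda_eq_conj_mul_conjRho ⟨f, hNle hf⟩).symm]
  exact mul_mem (mem_sup_right ⟨_, hf, rfl⟩) (inv_mem (mem_sup_left ⟨_, hf, rfl⟩))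

theorem map_conjRho_sup_range_conj :
    (N.subgroupOf (Hol G)).map conjRho ⊔ (MulAut.conj : G →* MulAut G).range =
      (N.subgroupOf (Hol G)).map conjLambda ⊔ (MulAut.conj : G →* MulAut G).range := by
  apply le_antisymm <;> refine sup_le ?_ le_sup_right <;> rintro _ ⟨f, hf, rfl⟩
  · rw [eq_inv_mul_of_mul_eq (conjLambda_eq_conj_mul_conjRho f).symm]
    exact mul_mem (inv_mem (mem_sup_right ⟨_, rfl⟩)) (mem_sup_left ⟨f, hf, rfl⟩)
  · rw [conjLambda_eq_conj_mul_conjRho f]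
    exact mul_mem (mem_sup_right ⟨_, rfl⟩) (mem_sup_left ⟨f, hf, rfl⟩)

theorem nonempty_quotient_comap_lambda_mulEquiv (hNle : N ≤ Hol G)
    (hN : Hol G ≤ normalizer (N : Set (Equiv.Perm G))) (hreg : N.IsRegular)
    [(N.comap (lambda G)).Normal] :
    Nonempty (G ⧸ N.comap (lambda G) ≃* (N.subgroupOf (Hol G)).map conjRho) := by
  have hmk (f : N.subgroupOf (Hol G)) (x : G) :
      ((conjLambda (f : Hol G) x : G) : G ⧸ N.comap (lambda G)) = x :=
    QuotientGroup.eq_iff_div_mem.mpr <| by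
      simpa [div_eq_mul_inv] using conjLambda_apply_mul_inv_mem hN f.2 x
  let φ : N.subgroupOf (Hol G) →* G ⧸ N.comap (lambda G) :=
    MonoidHom.mk' (fun f => ((((f : Hol G) : Equiv.Perm G) 1 : G) : G ⧸ _)⁻¹) fun f f' => by
      simp only [coe_mul, Equiv.Perm.mul_apply]
      rw [apply_eq_conjLambda_mul (f : Hol G), QuotientGroup.mk_mul, hmk, mul_inv_rev]
  refine nonempty_mulEquiv_map_of_ker_eq φ (fun q => ?_) conjRho ?_
  · obtain ⟨x, rfl⟩ := QuotientGroup.mk_surjective q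
    obtain ⟨f, hf, hfx⟩ := hreg.exists_apply_eq 1 x⁻¹
    exact ⟨⟨⟨f, hNle hf⟩, hf⟩, by simp [φ, hfx]⟩
  · ext f
    rw [MonoidHom.mem_ker, mem_subgroupOf, MonoidHom.mem_ker, conjRho_eq_one_iff,
      ← apply_one_mem_comap_lambda_iff hreg (f := ((f : Hol G) : Equiv.Perm G)) f.2,
      ← QuotientGroup.eq_one_iff]
    simp [φ]

theorem nonempty_quotient_comap_rho_mulEquiv (hNle : N ≤ Hol G)
    (hN : Hol G ≤ normalizer (N : Set (Equiv.Perm G))) (hreg : N.IsRegular)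
    [(N.comap (rho G)).Normal] :
    Nonempty (G ⧸ N.comap (rho G) ≃* (N.subgroupOf (Hol G)).map conjLambda) := by
  have hmk (f : N.subgroupOf (Hol G)) (x : G) :
      ((conjRho (f : Hol G) x : G) : G ⧸ N.comap (rho G)) = x :=
    QuotientGroup.eq_iff_div_mem.mpr <| by
      simpa [div_eq_mul_inv] using conjRho_apply_mul_inv_mem hN f.2 x
  let φ : N.subgroupOf (Hol G) →* G ⧸ N.comap (rho G) :=
    MonoidHom.mk' (fun f => ((((f : Hol G) : Equiv.Perm G) 1 : G) : G ⧸ _)) fun f f' => by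
      simp only [coe_mul, Equiv.Perm.mul_apply]
      rw [apply_eq_mul_conjRho (f : Hol G), QuotientGroup.mk_mul, hmk]
  refine nonempty_mulEquiv_map_of_ker_eq φ (fun q => ?_) conjLambda ?_
  · obtain ⟨x, rfl⟩ := QuotientGroup.mk_surjective q
    obtain ⟨f, hf, hfx⟩ := hreg.exists_apply_eq 1 x
    exact ⟨⟨⟨f, hNle hf⟩, hf⟩, by simp [φ, hfx]⟩
  · ext f
    rw [MonoidHom.mem_ker, mem_subgroupOf, MonoidHom.mem_ker, conjLambda_eq_one_iff,
      ← apply_one_mem_comap_rho_iff hreg (f := ((f : Hol G) : Equiv.Perm G)) f.2,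
      ← QuotientGroup.eq_one_iff]
    rfl

end RegularNormal

section Main

variable {G : Type*} [Group G]

theorem exists_mem_NHol_notMem_Hol [Nontrivial G] (hZ : center G = ⊥)
    (hT : Nat.card (THol G) ≠ 2) :
    ∃ θ ∈ NHol G, θ ∉ Hol G ∧ Equiv.inv G * θ ∉ Hol G := by
  let b : THol G := QuotientGroup.mk ⟨Equiv.inv G, inv_mem_NHol⟩
  have mk_eq_one (θ : NHol G) :
      (QuotientGroup.mk θ : THol G) = 1 ↔ (θ : Equiv.Perm G) ∈ Hol G :=
    QuotientGroup.eq_one_iff (N := (Hol G).subgroupOf (NHol G)) θ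
  have hb : b ≠ 1 := fun h => inv_notMem_Hol hZ ((mk_eq_one _).mp h)
  obtain ⟨t, ht1, htb⟩ : ∃ t : THol G, t ≠ 1 ∧ t ≠ b := by
    by_contra! h
    exact hT ((Nat.card_eq_two_iff' 1).mpr ⟨b, hb, fun t ht => h t ht⟩)
  obtain ⟨θ, rfl⟩ := QuotientGroup.mk_surjective t
  refine ⟨θ, θ.2, fun h => ht1 ((mk_eq_one θ).mpr h), fun h => htb ?_⟩
  refine (QuotientGroup.eq (s := (Hol G).subgroupOf (NHol G))).mpr ?_
  have hinv : (Equiv.inv G)⁻¹ = Equiv.inv G := Equiv.inv_symm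
  simpa [mem_subgroupOf, hinv] using inv_mem h

theorem exists_isRegular_of_card_THol_ne_two [Nontrivial G] (hZ : center G = ⊥)
    (hT : Nat.card (THol G) ≠ 2) :
    ∃ N : Subgroup (Equiv.Perm G), N ≤ Hol G ∧ Hol G ≤ normalizer (N : Set (Equiv.Perm G)) ∧
      N.IsRegular ∧ N ≠ (lambda G).range ∧ N ≠ (rho G).range := by
  obtain ⟨θ, hθ, hθHol, hιθHol⟩ := exists_mem_NHol_notMem_Hol hZ hT
  have hHol : (Hol G).map (MulAut.conj θ : Equiv.Perm G →* Equiv.Perm G) = Hol G :=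
    mem_normalizer_iff_map_conj_eq.mp hθ
  refine ⟨(lambda G).range.map (MulAut.conj θ : Equiv.Perm G →* Equiv.Perm G), ?_, ?_,
    isRegular_lambda_range.map_conj θ, fun h => hθHol (mem_normalizer_iff_map_conj_eq.mpr h),
    fun h => hιθHol ?_⟩
  · exact hHol ▸ map_mono lambda_range_le_Hol
  · rw [← map_normalizer_eq_of_bijective _ (MulAut.conj θ).bijective]
    exact hHol.ge
  · rw [Hol, mem_normalizer_iff_map_conj_eq, map_conj_mul, h, MonoidHom.map_range,
      conj_inv_comp_rho]

end Main

/-- If `G` is a non-trivial centerless group and `T(G)` is not cyclic of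
order `2`, then there exist non-trivial proper characteristic subgroups `K₁, K₂` of `G`
and centerless normal subgroups `Q₁, Q₂` of `Aut(G)` with `K₁ ∩ K₂ = 1`,
`[G,G] ⊆ K₁K₂`, `Q₁ ∩ Q₂ = 1`, `Inn(G) ⊆ Q₁Q₂`, `Q₁·Inn(G) = Q₂·Inn(G)`,
`G/K₁ ≅ Q₁` and `G/K₂ ≅ Q₂`. (Products of the normal subgroups involved are
expressed by joins `⊔`.) -/
theorem exists_subgroups_of_T_not_cyclic_of_order_two
    (G : Type*) [Group G] [Nontrivial G] (hZ : Subgroup.center G = ⊥)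
    (hT : ¬(IsCyclic (THol G) ∧ Nat.card (THol G) = 2)) :
    ∃ (K₁ K₂ : Subgroup G) (Q₁ Q₂ : Subgroup (MulAut G)),
      K₁ ≠ ⊥ ∧ K₁ ≠ ⊤ ∧ K₂ ≠ ⊥ ∧ K₂ ≠ ⊤ ∧
      K₁.Characteristic ∧ K₂.Characteristic ∧
      Q₁.Normal ∧ Q₂.Normal ∧
      Subgroup.center ↥Q₁ = ⊥ ∧ Subgroup.center ↥Q₂ = ⊥ ∧
      K₁ ⊓ K₂ = ⊥ ∧ commutator G ≤ K₁ ⊔ K₂ ∧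
      Q₁ ⊓ Q₂ = ⊥ ∧
      (MulAut.conj : G →* MulAut G).range ≤ Q₁ ⊔ Q₂ ∧
      Q₁ ⊔ (MulAut.conj : G →* MulAut G).range
        = Q₂ ⊔ (MulAut.conj : G →* MulAut G).range ∧
      (∃ _ : K₁.Normal, Nonempty ((G ⧸ K₁) ≃* ↥Q₁)) ∧
      (∃ _ : K₂.Normal, Nonempty ((G ⧸ K₂) ≃* ↥Q₂)) := by
  have hcard : Nat.card (THol G) ≠ 2 := fun h => hT ⟨isCyclic_of_prime_card h, h⟩
  obtain ⟨N, hNle, hN, hreg, hlam, hrho⟩ := exists_isRegular_of_card_THol_ne_two hZ hcard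
  have := comap_lambda_characteristic hN
  have := comap_rho_characteristic hN
  have hQ₁ := normal_map_conjRho hNle hN
  have hQ₂ := normal_map_conjLambda hNle hN
  have hinf := map_conjRho_inf_map_conjLambda hZ hN hreg
  have hInn := range_conj_le_map_conjRho_sup_map_conjLambda hNle hreg
  exact ⟨N.comap (lambda G), N.comap (rho G), _, _,
    comap_lambda_ne_bot hNle hN hreg hrho, comap_lambda_ne_top hreg hlam,
    comap_rho_ne_bot hNle hN hreg hlam, comap_rho_ne_top hreg hrho,
    inferInstance, inferInstance, hQ₁, hQ₂,
    MulAut.center_eq_bot_of_inf_eq_bot hZ hQ₁ hQ₂ hinf hInn,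
    MulAut.center_eq_bot_of_inf_eq_bot hZ hQ₂ hQ₁ (by rwa [inf_comm]) (by rwa [sup_comm]),
    comap_lambda_inf_comap_rho hZ hreg, commutator_le_comap_lambda_sup_comap_rho hNle hN hreg,
    hinf, hInn, map_conjRho_sup_range_conj,
    ⟨inferInstance, nonempty_quotient_comap_lambda_mulEquiv hNle hN hreg⟩,
    ⟨inferInstance, nonempty_quotient_comap_rho_mulEquiv hNle hN hreg⟩⟩
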